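/- arXiv:2603.26371 — 7 statements merged into one kernel-verified Lean document; each statement's English description precedes it below -/
import Mathlib

section
/- The permutation w = (n+1, n, ..., n-i+3, n-i+1, n-i, ..., 2, 1, n-i+2) of {1,...,n+1} (obtained as w_0 s_i s_{i+1} ... s_n in S_{n+1}, for 2 ≤ i ≤ n-1) avoids both patterns 3412 and 4231. -/
/-- The permutation `w = (n+1, n, ..., n-i+3, n-i+1, n-i, ..., 2, 1, n-i+2)` of `{1,...,n+1}`
(which is `w₀ sᵢ sᵢ₊₁ ⋯ sₙ` in `S_{n+1}`, for `2 ≤ i ≤ n-1`) avoids the patterns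
3412 and 4231. -/
theorem stmt1 (n i : ℕ) (hi2 : 2 ≤ i) (hin : i ≤ n - 1)
    (w : ℕ → ℤ)
    (hw : ∀ j, 1 ≤ j → j ≤ n + 1 →
      w j = if j ≤ i - 1 then (n : ℤ) + 2 - j
            else if j ≤ n then (n : ℤ) + 1 - j
            else (n : ℤ) - i + 2) :
    ∀ a b c d : ℕ, 1 ≤ a → a < b → b < c → c < d → d ≤ n + 1 →
      ¬(w c < w d ∧ w d < w a ∧ w a < w b) ∧
      ¬(w d < w b ∧ w b < w c ∧ w c < w a) := by
  have key : ∀ a b : ℕ, 1 ≤ a → a < b → b ≤ n → w b < w a := by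
    intro a b ha hab hbn
    rw [hw a ha (by omega), hw b (by omega) (by omega)]
    split_ifs <;> push_cast <;> omega
  intro a b c d ha hab hbc hcd hd
  constructor
  · rintro ⟨_, _, h3⟩
    exact absurd h3 (not_lt.2 (key a b ha hab (by omega)).le)
  · rintro ⟨_, h2, _⟩
    exact absurd h2 (not_lt.2 (key b c (by omega) hbc (by omega)).le)
end

section
/- For 2 ≤ i ≤ n-1 and i ≤ k ≤ n-1, the permutation w_0 s_i s_{i+1} ... s_k = (n+1, n, ..., n-i+3, n-i+1, n-i, ..., n-k+1, n-i+2, n-k, n-k-1, ..., 2, 1) in S_{n+1} contains the pattern 4231. -/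
/-- For `2 ≤ i ≤ n-1` and `i ≤ k ≤ n-1`, the permutation
`w₀ sᵢ sᵢ₊₁ ⋯ s_k = (n+1, n, ..., n-i+3, n-i+1, n-i, ..., n-k+1, n-i+2, n-k, ..., 2, 1)`
in `S_{n+1}` contains the pattern 4231. -/
theorem stmt2 (n i k : ℕ) (hi2 : 2 ≤ i) (hin : i ≤ n - 1) (hik : i ≤ k) (hkn : k ≤ n - 1)
    (w : ℕ → ℤ)
    (hw : ∀ j, 1 ≤ j → j ≤ n + 1 →
      w j = if j ≤ i - 1 then (n : ℤ) + 2 - j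
            else if j ≤ k then (n : ℤ) + 1 - j
            else if j = k + 1 then (n : ℤ) - i + 2
            else (n : ℤ) + 2 - j) :
    ∃ a b c d : ℕ, 1 ≤ a ∧ a < b ∧ b < c ∧ c < d ∧ d ≤ n + 1 ∧
      w d < w b ∧ w b < w c ∧ w c < w a := by
  have hn3 : 3 ≤ n := by omega
  have e1 : w 1 = (n : ℤ) + 1 := by
    rw [hw 1 (by omega) (by omega), if_pos (by omega)]; push_cast; ring
  have e2 : w i = (n : ℤ) + 1 - i := by
    rw [hw i (by omega) (by omega), if_neg (by omega), if_pos hik]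
  have e3 : w (k + 1) = (n : ℤ) - i + 2 := by
    rw [hw (k + 1) (by omega) (by omega), if_neg (by omega), if_neg (by omega), if_pos rfl]
  have e4 : w (k + 2) = (n : ℤ) - k := by
    rw [hw (k + 2) (by omega) (by omega), if_neg (by omega), if_neg (by omega),
      if_neg (by omega)]
    push_cast; ring
  exact ⟨1, i, k + 1, k + 2, le_refl 1, by omega, by omega, by omega, by omega,
    by rw [e2, e4]; omega, by rw [e2, e3]; omega, by rw [e1, e3]; omega⟩
end

section
/- For 2 ≤ i ≤ n-1 and 2 ≤ k ≤ i, the permutation w_0 s_i s_{i-1} ... s_k in S_{n+1}, given in one-line notation as (n+1, n, ..., n-k+3, n-i+1, n-k+2, n-k+1, ..., n-i+2, n-i, n-i-1, ..., 2, 1), contains the pattern 4231. -/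
/-- For `2 ≤ i ≤ n-1` and `2 ≤ k ≤ i`, the permutation
`w₀ sᵢ sᵢ₋₁ ⋯ s_k = (n+1, n, ..., n-k+3, n-i+1, n-k+2, n-k+1, ..., n-i+2, n-i, ..., 2, 1)`
in `S_{n+1}` contains the pattern 4231. -/
theorem stmt3 (n i k : ℕ) (hi2 : 2 ≤ i) (hin : i ≤ n - 1) (hk2 : 2 ≤ k) (hki : k ≤ i)
    (w : ℕ → ℤ)
    (hw : ∀ j, 1 ≤ j → j ≤ n + 1 →
      w j = if j ≤ k - 1 then (n : ℤ) + 2 - j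
            else if j = k then (n : ℤ) - i + 1
            else if j ≤ i + 1 then (n : ℤ) + 3 - j
            else (n : ℤ) + 2 - j) :
    ∃ a b c d : ℕ, 1 ≤ a ∧ a < b ∧ b < c ∧ c < d ∧ d ≤ n + 1 ∧
      w d < w b ∧ w b < w c ∧ w c < w a := by
  have hn : 3 ≤ n := by omega
  have ha : w 1 = (n : ℤ) + 1 := by
    rw [hw 1 le_rfl (by omega), if_pos (by omega)]; push_cast; ring
  have hb : w k = (n : ℤ) - i + 1 := by
    rw [hw k (by omega) (by omega), if_neg (by omega), if_pos rfl]
  have hc : w (k + 1) = (n : ℤ) + 2 - k := by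
    rw [hw (k + 1) (by omega) (by omega), if_neg (by omega), if_neg (by omega),
      if_pos (by omega)]; push_cast; ring
  have hd : w (i + 2) = (n : ℤ) - i := by
    rw [hw (i + 2) (by omega) (by omega), if_neg (by omega), if_neg (by omega),
      if_neg (by omega)]; push_cast; ring
  exact ⟨1, k, k + 1, i + 2, by omega, by omega, by omega, by omega, by omega,
    by rw [hb, hd]; omega, by rw [hb, hc]; omega, by rw [ha, hc]; omega⟩
end

section
/- In the symmetric group S_{n+1}, an element w ≠ 1 has a unique reduced expression if and only if w = s_i s_{i+1} ... s_k or w = s_i s_{i-1} ... s_k for some indices, i.e., w is a product of consecutive simple transpositions with strictly increasing or strictly decreasing indices. -/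
/-- The adjacent transposition, 0-indexed: the swap of `j` and `j+1` in `Equiv.Perm ℕ`. -/
def sTr (j : ℕ) : Equiv.Perm ℕ := Equiv.swap j (j + 1)

/-- The product of the word `s_{j₁} s_{j₂} ⋯` of adjacent transpositions. -/
def wordProdS (l : List ℕ) : Equiv.Perm ℕ := (l.map sTr).prod

/-- `l` is a reduced expression of `w` in `S_{n+1}` (generators indexed `0,...,n-1`). -/
def IsReducedWordS (n : ℕ) (l : List ℕ) (w : Equiv.Perm ℕ) : Prop :=
  (∀ j ∈ l, j < n) ∧ wordProdS l = w ∧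
    ∀ l' : List ℕ, (∀ j ∈ l', j < n) → wordProdS l' = w → l.length ≤ l'.length

lemma wordProdS_nil : wordProdS [] = 1 := rfl
lemma wordProdS_cons (a : ℕ) (l : List ℕ) : wordProdS (a :: l) = sTr a * wordProdS l := by
  simp [wordProdS]
lemma wordProdS_append (l₁ l₂ : List ℕ) :
    wordProdS (l₁ ++ l₂) = wordProdS l₁ * wordProdS l₂ := by
  simp [wordProdS]

lemma sTr_mul_self (a : ℕ) : sTr a * sTr a = 1 := Equiv.swap_mul_self _ _

lemma sTr_apply (a x : ℕ) : sTr a x = if x = a then a + 1 else if x = a + 1 then a else x := by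
  simp [sTr, Equiv.swap_apply_def]

lemma sTr_cases (a y : ℕ) : sTr a y = y ∨ sTr a y = y + 1 ∨ y = sTr a y + 1 := by
  rw [sTr_apply]; split_ifs <;> omega

lemma wordProdS_dist (l : List ℕ) (x : ℕ) :
    wordProdS l x ≤ x + l.length ∧ x ≤ wordProdS l x + l.length := by
  induction l generalizing x with
  | nil => simp [wordProdS_nil]
  | cons a t ih =>
    rw [wordProdS_cons]
    have h := ih x
    have h2 := sTr_cases a (wordProdS t x)
    simp only [Equiv.Perm.mul_apply, List.length_cons]
    omega

lemma sTr_inv (a : ℕ) : (sTr a)⁻¹ = sTr a := Equiv.swap_inv _ _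

lemma wordProdS_reverse (l : List ℕ) : wordProdS l.reverse = (wordProdS l)⁻¹ := by
  induction l with
  | nil => simp [wordProdS_nil]
  | cons a t ih =>
    rw [List.reverse_cons, wordProdS_append, ih]
    have h1 : wordProdS [a] = sTr a := by simp [wordProdS_cons, wordProdS_nil]
    rw [h1, wordProdS_cons, mul_inv_rev, sTr_inv]

set_option maxHeartbeats 1000000 in
lemma sTr_comm (a b : ℕ) (h : a + 2 ≤ b) : sTr a * sTr b = sTr b * sTr a := by
  ext x
  simp only [Equiv.Perm.mul_apply, sTr_apply]
  split_ifs <;> omega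

set_option maxHeartbeats 1000000 in
lemma sTr_braid (a : ℕ) : sTr a * sTr (a+1) * sTr a = sTr (a+1) * sTr a * sTr (a+1) := by
  ext x
  simp only [Equiv.Perm.mul_apply, sTr_apply]
  split_ifs <;> omega

lemma sTr_injective {a b : ℕ} (h : sTr a = sTr b) : a = b := by
  have h1 := DFunLike.congr_fun h a
  have h2 := DFunLike.congr_fun h b
  rw [sTr_apply, sTr_apply] at h1 h2
  split_ifs at h1 h2 <;> omega

lemma wordProdS_range'_apply (c : ℕ) : ∀ i x, wordProdS (List.range' i (c+1)) x =
    if x < i then x else if x ≤ i + c then x + 1 else if x = i + c + 1 then i else x := by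
  induction c with
  | zero =>
    intro i x
    simp only [Nat.zero_add, List.range'_one, wordProdS_cons, wordProdS_nil, mul_one, sTr_apply]
    split_ifs <;> omega
  | succ c ih =>
    intro i x
    rw [List.range'_succ, wordProdS_cons]
    simp only [Equiv.Perm.mul_apply]
    rw [ih (i+1) x, sTr_apply]
    split_ifs <;> omega

/-- Length lower bound for any word representing the increasing run. -/
lemma length_lb {c i : ℕ} {l : List ℕ}
    (h : wordProdS l = wordProdS (List.range' i (c+1))) : c + 1 ≤ l.length := by
  have h1 := wordProdS_dist l (i + c + 1)
  have h2 : wordProdS l (i + c + 1) = i := by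
    rw [h, wordProdS_range'_apply]
    split_ifs <;> omega
  omega

/-- Uniqueness of the reduced word of the increasing run. -/
lemma uniq_word (c : ℕ) : ∀ i (l : List ℕ), l.length = c + 1 →
    wordProdS l = wordProdS (List.range' i (c+1)) → l = List.range' i (c+1) := by
  induction c with
  | zero =>
    intro i l hlen hprod
    match l, hlen with
    | [j], _ =>
      have h : wordProdS [j] = wordProdS (List.range' i 1) := hprod
      have h1 : sTr j = sTr i := by
        have e1 : wordProdS [j] = sTr j := by simp [wordProdS_cons, wordProdS_nil]
        have e2 : wordProdS (List.range' i 1) = sTr i := by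
          simp [List.range'_one, wordProdS_cons, wordProdS_nil]
        rw [e1, e2] at h; exact h
      rw [sTr_injective h1]
      simp [List.range'_one]
  | succ c ih =>
    intro i l hlen hprod
    match l, hlen with
    | j :: t, hlen =>
      have hlent : t.length = c + 1 := by simpa using hlen
      have ht : wordProdS t = sTr j * wordProdS (List.range' i (c+2)) := by
        have : sTr j * wordProdS (j :: t) = wordProdS t := by
          rw [wordProdS_cons, ← mul_assoc, sTr_mul_self, one_mul]
        rw [← this, hprod]
      have hji : j = i := by
        by_contra hne
        have hd := wordProdS_dist t (i + c + 2)
        have hv : wordProdS t (i + c + 2) = sTr j i := by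
          rw [ht]
          simp only [Equiv.Perm.mul_apply]
          rw [wordProdS_range'_apply]
          split_ifs <;> omega
        rw [sTr_apply] at hv
        split_ifs at hv <;> omega
      subst hji
      have ht2 : wordProdS t = wordProdS (List.range' (j+1) (c+1)) := by
        rw [ht, List.range'_succ, wordProdS_cons, ← mul_assoc, sTr_mul_self, one_mul]
      have := ih (j+1) t hlent ht2
      rw [List.range'_succ, this]

lemma list_form : ∀ l : List ℕ, l ≠ [] →
    (∀ (u : List ℕ) a b v, l = u ++ a :: b :: v → b = a + 1 ∨ a = b + 1) →
    (∀ (u : List ℕ) a b v, l = u ++ a :: b :: a :: v → False) →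
    (∃ i, l = List.range' i l.length) ∨ (∃ i, l.reverse = List.range' i l.length) := by
  intro l
  induction l with
  | nil => intro h; exact absurd rfl h
  | cons a t ih =>
    intro _ h1 h2
    match t with
    | [] => exact Or.inl ⟨a, by simp [List.range'_one]⟩
    | b :: t =>
      have hab := h1 [] a b t rfl
      have ihr := ih (by simp)
        (fun u a' b' v hu => h1 (a :: u) a' b' v (by rw [hu]; rfl))
        (fun u a' b' v hu => h2 (a :: u) a' b' v (by rw [hu]; rfl))
      rcases ihr with ⟨i', he⟩ | ⟨i', he⟩
      · -- b :: t increasing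
        rw [List.length_cons, List.range'_succ] at he
        obtain ⟨hb, ht⟩ := List.cons_eq_cons.mp he
        subst hb
        rcases hab with hab | hab
        · -- increasing overall
          left
          refine ⟨a, ?_⟩
          simp only [List.length_cons, List.range'_succ, ← hab]
          rw [← ht]
        · -- a = b + 1
          cases t with
          | nil =>
            right
            refine ⟨b, ?_⟩
            have hl2 : ([a, b] : List ℕ).length = 2 := by simp
            rw [hl2, List.range'_succ, List.range'_one]
            simp [hab]
          | cons c t' =>
            simp only [List.length_cons] at ht
            rw [List.range'_succ] at ht
            have hc : c = b + 1 := (List.cons_eq_cons.mp ht).1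
            have hca : c = a := by omega
            exact absurd (h2 [] a b t' (by rw [hca]; rfl)) (fun x => x)
      · -- b :: t decreasing
        rw [List.length_cons, List.range'_1_concat, List.reverse_cons] at he
        have hsplit := List.append_inj' he rfl
        have htr : t.reverse = List.range' i' t.length := hsplit.1
        have hb : b = i' + t.length := by
          have := hsplit.2; simpa using this
        rcases hab with hab | hab
        · -- b = a + 1
          cases t with
          | nil =>
            left
            refine ⟨a, ?_⟩
            have hl2 : ([a, b] : List ℕ).length = 2 := by simp
            rw [hl2, List.range'_succ, List.range'_one, hab]
          | cons c t' =>
            have htr2 : t'.reverse ++ [c] = List.range' i' t'.length ++ [i' + t'.length] := by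
              rw [← List.range'_1_concat]; simpa using htr
            have hc : c = i' + t'.length := by
              have := (List.append_inj' htr2 rfl).2; simpa using this
            have hca : c = a := by
              simp only [List.length_cons] at hb; omega
            exact absurd (h2 [] a b t' (by rw [hca]; rfl)) (fun x => x)
        · -- decreasing overall
          right
          refine ⟨i', ?_⟩
          simp only [List.length_cons, List.reverse_cons]
          have ha : a = i' + (t.length + 1) := by omega
          rw [List.range'_1_concat, List.range'_1_concat, ← he, ha]


/-- In `S_{n+1}`, an element `w ≠ 1` has a unique reduced expression if and only if
`w = sᵢ sᵢ₊₁ ⋯ s_k` or `w = sᵢ sᵢ₋₁ ⋯ s_k`, i.e. `w` is a product of consecutive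
simple transpositions with strictly increasing or strictly decreasing indices. -/
theorem stmt10 (n : ℕ) (w : Equiv.Perm ℕ)
    (hW : ∃ l : List ℕ, (∀ j ∈ l, j < n) ∧ wordProdS l = w)
    (hw1 : w ≠ 1) :
    (∃ l, IsReducedWordS n l w ∧ ∀ l', IsReducedWordS n l' w → l' = l) ↔
      ∃ i k : ℕ, i ≤ k ∧ k < n ∧
        (w = wordProdS (List.range' i (k - i + 1)) ∨
         w = wordProdS ((List.range' i (k - i + 1)).reverse)) := by
  constructor
  · rintro ⟨l, ⟨hlt, hprod, hmin⟩, hu⟩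
    have hlne : l ≠ [] := by
      rintro rfl
      exact hw1 (hprod.symm.trans wordProdS_nil)
    -- no adjacent equal or far-apart letters
    have hAB : ∀ (u : List ℕ) a b v, l = u ++ a :: b :: v → b = a + 1 ∨ a = b + 1 := by
      intro u a b v hdec
      by_contra hcon
      push_neg at hcon
      by_cases hab : a = b
      · subst hab
        have e : wordProdS (u ++ a :: a :: v) = wordProdS (u ++ v) := by
          rw [wordProdS_append, wordProdS_cons, wordProdS_cons, ← mul_assoc (sTr a) (sTr a),
            sTr_mul_self, one_mul, ← wordProdS_append]
        have hms : ∀ j ∈ u ++ v, j < n := by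
          intro j hj
          apply hlt
          rw [hdec]
          simp only [List.mem_append, List.mem_cons] at hj ⊢
          tauto
        have hle := hmin (u ++ v) hms (by rw [← e, ← hdec, hprod])
        rw [hdec] at hle
        simp only [List.length_append, List.length_cons] at hle
        omega
      · have hcomm : sTr a * sTr b = sTr b * sTr a := by
          rcases Nat.lt_or_ge a b with h | h
          · exact sTr_comm a b (by omega)
          · exact (sTr_comm b a (by omega)).symm
        have hprod2 : wordProdS (u ++ b :: a :: v) = w := by
          rw [← hprod, hdec, wordProdS_append, wordProdS_append, wordProdS_cons, wordProdS_cons,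
            wordProdS_cons, wordProdS_cons, ← mul_assoc (sTr b) (sTr a), ← hcomm,
            mul_assoc (sTr a) (sTr b)]
        have hms : ∀ j ∈ u ++ b :: a :: v, j < n := by
          intro j hj
          apply hlt
          rw [hdec]
          simp only [List.mem_append, List.mem_cons] at hj ⊢
          tauto
        have hlen2 : (u ++ b :: a :: v).length = l.length := by
          rw [hdec]; simp
        have hred2 : IsReducedWordS n (u ++ b :: a :: v) w :=
          ⟨hms, hprod2, fun l'' h1 h2 => hlen2 ▸ hmin l'' h1 h2⟩
        have heq := hu _ hred2
        rw [hdec] at heq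
        have := List.append_cancel_left heq
        have : b = a := (List.cons_eq_cons.mp this).1
        exact hab this.symm
    -- no braid pattern
    have hC : ∀ (u : List ℕ) a b v, l = u ++ a :: b :: a :: v → False := by
      intro u a b v hdec
      have hab := hAB u a b (a :: v) hdec
      have key : sTr a * sTr b * sTr a = sTr b * sTr a * sTr b := by
        rcases hab with h | h
        · rw [h]; exact sTr_braid a
        · rw [h]; exact (sTr_braid b).symm
      have hprod3 : wordProdS (u ++ b :: a :: b :: v) = w := by
        rw [← hprod, hdec, wordProdS_append, wordProdS_append, wordProdS_cons, wordProdS_cons,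
          wordProdS_cons, wordProdS_cons, wordProdS_cons, wordProdS_cons]
        have : sTr b * (sTr a * (sTr b * wordProdS v)) = sTr a * (sTr b * (sTr a * wordProdS v)) := by
          rw [← mul_assoc, ← mul_assoc, ← key, mul_assoc, mul_assoc]
        rw [this]
      have hms : ∀ j ∈ u ++ b :: a :: b :: v, j < n := by
        intro j hj
        apply hlt
        rw [hdec]
        simp only [List.mem_append, List.mem_cons] at hj ⊢
        tauto
      have hlen3 : (u ++ b :: a :: b :: v).length = l.length := by
        rw [hdec]; simp
      have hred3 : IsReducedWordS n (u ++ b :: a :: b :: v) w :=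
        ⟨hms, hprod3, fun l'' h1 h2 => hlen3 ▸ hmin l'' h1 h2⟩
      have heq := hu _ hred3
      rw [hdec] at heq
      have := List.append_cancel_left heq
      have hba : b = a := (List.cons_eq_cons.mp this).1
      omega
    have hpos : 1 ≤ l.length := List.length_pos_iff.mpr hlne
    rcases list_form l hlne hAB hC with ⟨i, hf⟩ | ⟨i, hf⟩
    · refine ⟨i, i + (l.length - 1), by omega, ?_, Or.inl ?_⟩
      · apply hlt
        rw [hf, List.mem_range'_1]
        simp only [List.length_range']
        omega
      · rw [show i + (l.length - 1) - i + 1 = l.length from by omega, ← hf, hprod]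
    · refine ⟨i, i + (l.length - 1), by omega, ?_, Or.inr ?_⟩
      · apply hlt
        rw [← List.mem_reverse, hf, List.mem_range'_1]
        omega
      · rw [show i + (l.length - 1) - i + 1 = l.length from by omega, ← hf,
          List.reverse_reverse, hprod]
  · rintro ⟨i, k, hik, hkn, hcase⟩
    have hkc : k - i + 1 = (k - i) + 1 := rfl
    set c := k - i with hcc
    rcases hcase with hc | hc
    · have hmem : ∀ j ∈ List.range' i (c + 1), j < n := by
        intro j hj
        rw [List.mem_range'_1] at hj
        omega
      have hred : IsReducedWordS n (List.range' i (c + 1)) w := by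
        refine ⟨hmem, hc.symm, fun l' _ h2 => ?_⟩
        have := length_lb (h2.trans hc)
        simpa using this
      refine ⟨_, hred, ?_⟩
      rintro l' ⟨h1', h2', h3'⟩
      have hle : l'.length ≤ c + 1 := by
        have := h3' (List.range' i (c + 1)) hmem hc.symm
        simpa using this
      have hge : c + 1 ≤ l'.length := length_lb (h2'.trans hc)
      exact uniq_word c i l' (by omega) (h2'.trans hc)
    · have hmem : ∀ j ∈ (List.range' i (c + 1)).reverse, j < n := by
        intro j hj
        rw [List.mem_reverse, List.mem_range'_1] at hj
        omega
      have hWeq : w⁻¹ = wordProdS (List.range' i (c + 1)) := by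
        rw [hc, wordProdS_reverse, inv_inv]
      have hred : IsReducedWordS n ((List.range' i (c + 1)).reverse) w := by
        refine ⟨hmem, hc.symm, fun l' _ h2 => ?_⟩
        have hrev : wordProdS l'.reverse = wordProdS (List.range' i (c + 1)) := by
          rw [wordProdS_reverse, h2, hWeq]
        have := length_lb hrev
        simpa using this
      refine ⟨_, hred, ?_⟩
      rintro l' ⟨h1', h2', h3'⟩
      have hle : l'.length ≤ c + 1 := by
        have := h3' ((List.range' i (c + 1)).reverse) hmem hc.symm
        simpa using this
      have hrev : wordProdS l'.reverse = wordProdS (List.range' i (c + 1)) := by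
        rw [wordProdS_reverse, h2', hWeq]
      have hge : c + 1 ≤ l'.length := by
        have := length_lb hrev
        simpa using this
      have := uniq_word c i l'.reverse (by simpa using (by omega : l'.length = c + 1)) hrev
      rw [← List.reverse_reverse l', this]
end

section
/- In the Weyl group of type D_n (n ≥ 4, n even), the signed permutation w_0 s_n s_{n-2} s_{n-3} ... s_1 has one-line notation (2, -3, -4, ..., -n, 1), where w_0 = (-1, ..., -n), and this element avoids all eleven forbidden patterns for smoothness in even type D_n listed: (-1,-3,-2), (2,1,-3,-4), (-2,-1,-3), (2,-3,1,-4), (-2,-4,3,1), (3,1,-2,-4), (3,-2,1,-4), (-3,-2,-1), (3,-2,-4,1), (-3,-4,-1,-2), (3,-4,1,-2). -/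
/-- Swap the entries in positions `a` and `b` of a one-line notation. -/
def swapAt' (a b : ℕ) (w : ℕ → ℤ) : ℕ → ℤ :=
  fun p => if p = a then w b else if p = b then w a else w p

/-- Right multiplication by the simple reflection `s_j` of `W(Dₙ)` (paper's
convention): for `1 ≤ j ≤ n-1`, `s_j` interchanges positions `n-j` and `n-j+1`
(0-indexed `n-j-1`, `n-j`), and `s_n` interchanges the first two positions while
changing both signs. -/
def applyGenD (n j : ℕ) (w : ℕ → ℤ) : ℕ → ℤ :=
  if j = n then fun p => if p = 0 then -(w 1) else if p = 1 then -(w 0) else w p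
  else swapAt' (n - j - 1) (n - j) w

/-- The signed permutation `w` (one-line notation on positions `0,...,n-1`) contains
the signed pattern `p : Fin k → ℤ`: some subsequence of `w` flattens to `p`,
i.e. matches it in signs and in relative order of absolute values. -/
def ContainsPat {k : ℕ} (n : ℕ) (w : ℕ → ℤ) (p : Fin k → ℤ) : Prop :=
  ∃ pos : Fin k → ℕ, StrictMono pos ∧ (∀ t, pos t < n) ∧
    (∀ t, 0 < p t ↔ 0 < w (pos t)) ∧
    (∀ s t, |p s| < |p t| ↔ |w (pos s)| < |w (pos t)|)

/-- Intermediate one-line notations while bubbling the `1` to the right. -/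
def Sfun (k p : ℕ) : ℤ :=
  if p = 0 then 2 else if p = k + 1 then 1
  else if p ≤ k then -((p : ℤ) + 2) else -((p : ℤ) + 1)

lemma foldl_aux (n : ℕ) (hn : 4 ≤ n) :
    ∀ m, m ≤ n - 2 → ∀ v : ℕ → ℤ, (∀ q, v q = Sfun (n - 2 - m) q) →
    ∀ q, (List.range' 1 m).reverse.foldl (fun v j => applyGenD n j v) v q
      = Sfun (n - 2) q := by
  intro m
  induction m with
  | zero => intro _ v hv q; simpa using hv q
  | succ m ih =>
    intro hm v hv q
    rw [show List.range' 1 (m+1) = List.range' 1 m ++ [1 + m] from by rw [List.range'_concat]; norm_num]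
    rw [List.reverse_append]
    simp only [List.reverse_singleton, List.singleton_append, List.foldl_cons]
    apply ih (by omega)
    intro r
    have hne : ¬ (1 + m = n) := by omega
    show applyGenD n (1+m) v r = _
    have h1 : applyGenD n (1+m) v = swapAt' (n-(1+m)-1) (n-(1+m)) v := by
      unfold applyGenD; rw [if_neg hne]
    rw [h1]
    unfold swapAt'
    simp only [hv, Sfun]
    split_ifs <;> omega

lemma stmt17_sign (n : ℕ) (hn : 4 ≤ n) (w : ℕ → ℤ)
    (hw : ∀ p < n, w p = if p = 0 then 2 else if p = n - 1 then 1 else -((p : ℤ) + 2)) :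
    ∀ q < n, (0 < w q ↔ q = 0 ∨ q = n - 1) := by
  intro q hq
  rw [hw q hq]
  split_ifs <;> omega

lemma stmt17_abs (n : ℕ) (hn : 4 ≤ n) (w : ℕ → ℤ)
    (hw : ∀ p < n, w p = if p = 0 then 2 else if p = n - 1 then 1 else -((p : ℤ) + 2)) :
    ∀ q < n, q ≠ 0 → q ≠ n - 1 → |w q| = (q : ℤ) + 2 := by
  intro q hq h0 h1
  rw [hw q hq, if_neg h0, if_neg h1, abs_neg, abs_of_nonneg (by positivity)]

/-- A positive pattern entry at an interior index is impossible. -/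
lemma lemA {k n : ℕ} {w : ℕ → ℤ}
    (hsign : ∀ q < n, 0 < w q ↔ q = 0 ∨ q = n - 1)
    (p : Fin k → ℤ) (t : Fin k) (ht0 : 0 < (t : ℕ)) (ht1 : (t : ℕ) + 1 < k)
    (hpt : 0 < p t) : ¬ ContainsPat n w p := by
  rintro ⟨pos, hmono, hlt, hsgn, -⟩
  have h1 : 0 < w (pos t) := (hsgn t).mp hpt
  have h2 := (hsign _ (hlt t)).mp h1
  have h3 : pos ⟨0, by omega⟩ < pos t := hmono (by rw [Fin.lt_def]; exact ht0)
  have h4 : pos t < pos ⟨(t : ℕ) + 1, ht1⟩ := hmono (by rw [Fin.lt_def]; simp)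
  have h5 := hlt ⟨(t : ℕ) + 1, ht1⟩
  omega

/-- Two negative pattern entries with decreasing absolute values are impossible. -/
lemma lemB {k n : ℕ} {w : ℕ → ℤ}
    (hsign : ∀ q < n, 0 < w q ↔ q = 0 ∨ q = n - 1)
    (habsw : ∀ q < n, q ≠ 0 → q ≠ n - 1 → |w q| = (q : ℤ) + 2)
    (p : Fin k → ℤ) (s t : Fin k) (hst : s < t)
    (hps : p s < 0) (hpt : p t < 0) (hab : |p t| < |p s|) :
    ¬ ContainsPat n w p := by
  rintro ⟨pos, hmono, hlt, hsgn, habs⟩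
  have hws : ¬ 0 < w (pos s) := fun h => by have := (hsgn s).mpr h; omega
  have hwt : ¬ 0 < w (pos t) := fun h => by have := (hsgn t).mpr h; omega
  have hs2 : ¬ (pos s = 0 ∨ pos s = n - 1) := fun h => hws ((hsign _ (hlt s)).mpr h)
  have ht2 : ¬ (pos t = 0 ∨ pos t = n - 1) := fun h => hwt ((hsign _ (hlt t)).mpr h)
  push_neg at hs2 ht2
  have e1 := habsw _ (hlt s) hs2.1 hs2.2
  have e2 := habsw _ (hlt t) ht2.1 ht2.2
  have h3 := (habs t s).mp hab
  have h4 : pos s < pos t := hmono hst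
  rw [e1, e2] at h3
  omega

/-- A positive first entry followed by a negative entry of smaller absolute value
is impossible. -/
lemma lemC {k n : ℕ} {w : ℕ → ℤ}
    (hsign : ∀ q < n, 0 < w q ↔ q = 0 ∨ q = n - 1)
    (habsw : ∀ q < n, q ≠ 0 → q ≠ n - 1 → |w q| = (q : ℤ) + 2)
    (hw0 : w 0 = 2)
    (p : Fin k → ℤ) (hk : 0 < k) (t : Fin k) (ht : 0 < (t : ℕ))
    (hp0 : 0 < p ⟨0, hk⟩) (hpt : p t < 0) (hab : |p t| < |p ⟨0, hk⟩|) :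
    ¬ ContainsPat n w p := by
  rintro ⟨pos, hmono, hlt, hsgn, habs⟩
  have h1 := (hsign _ (hlt ⟨0, hk⟩)).mp ((hsgn _).mp hp0)
  have h4 : pos ⟨0, hk⟩ < pos t := hmono (by rw [Fin.lt_def]; exact ht)
  have h5 := hlt t
  have hpos0 : pos ⟨0, hk⟩ = 0 := by omega
  have hwt : ¬ 0 < w (pos t) := fun h => by have := (hsgn t).mpr h; omega
  have ht2 : ¬ (pos t = 0 ∨ pos t = n - 1) := fun h => hwt ((hsign _ h5).mpr h)
  push_neg at ht2
  have e2 := habsw _ h5 ht2.1 ht2.2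
  have h3 := (habs t ⟨0, hk⟩).mp hab
  rw [e2, hpos0, hw0] at h3
  norm_num at h3
  omega

/-- In `W(Dₙ)` (`n ≥ 4` even), the element `w₀ sₙ sₙ₋₂ sₙ₋₃ ⋯ s₁` has one-line
notation `(2, -3, -4, ..., -n, 1)` (where `w₀ = (-1, ..., -n)`), and it avoids all
eleven forbidden patterns for smoothness in even type `Dₙ`. -/
theorem stmt17 (n : ℕ) (hn : 4 ≤ n) (hev : n % 2 = 0)
    (w : ℕ → ℤ)
    (hw : ∀ p < n, w p = if p = 0 then 2 else if p = n - 1 then 1 else -((p : ℤ) + 2)) :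
    (∀ p < n,
      (n :: (List.range' 1 (n - 2)).reverse).foldl
        (fun v j => applyGenD n j v) (fun q => -((q : ℤ) + 1)) p = w p) ∧
    ¬ ContainsPat n w ![-1, -3, -2] ∧
    ¬ ContainsPat n w ![2, 1, -3, -4] ∧
    ¬ ContainsPat n w ![-2, -1, -3] ∧
    ¬ ContainsPat n w ![2, -3, 1, -4] ∧
    ¬ ContainsPat n w ![-2, -4, 3, 1] ∧
    ¬ ContainsPat n w ![3, 1, -2, -4] ∧
    ¬ ContainsPat n w ![3, -2, 1, -4] ∧
    ¬ ContainsPat n w ![-3, -2, -1] ∧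
    ¬ ContainsPat n w ![3, -2, -4, 1] ∧
    ¬ ContainsPat n w ![-3, -4, -1, -2] ∧
    ¬ ContainsPat n w ![3, -4, 1, -2] := by
  have hsign := stmt17_sign n hn w hw
  have habsw := stmt17_abs n hn w hw
  have hw0 : w 0 = 2 := by rw [hw 0 (by omega)]; simp
  refine ⟨?_, ?_, ?_, ?_, ?_, ?_, ?_, ?_, ?_, ?_, ?_, ?_⟩
  · intro q hq
    rw [List.foldl_cons]
    have hstart : ∀ r, applyGenD n n (fun q => -((q : ℤ) + 1)) r = Sfun (n - 2 - (n - 2)) r := by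
      intro r
      rw [Nat.sub_self]
      have h1 : applyGenD n n (fun q => -((q : ℤ) + 1)) r
          = if r = 0 then 2 else if r = 1 then 1 else -((r : ℤ) + 1) := by
        unfold applyGenD
        rw [if_pos rfl]
        split_ifs <;> norm_num
      rw [h1]
      unfold Sfun
      split_ifs <;> omega
    rw [foldl_aux n hn (n - 2) le_rfl _ hstart q]
    rw [hw q hq]
    unfold Sfun
    split_ifs <;> omega
  · exact lemB hsign habsw _ 1 2 (by decide) (by decide) (by decide) (by decide)
  · exact lemA hsign _ 1 (by decide) (by decide) (by decide)
  · exact lemB hsign habsw _ 0 1 (by decide) (by decide) (by decide) (by decide)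
  · exact lemA hsign _ 2 (by decide) (by decide) (by decide)
  · exact lemA hsign _ 2 (by decide) (by decide) (by decide)
  · exact lemA hsign _ 1 (by decide) (by decide) (by decide)
  · exact lemA hsign _ 2 (by decide) (by decide) (by decide)
  · exact lemB hsign habsw _ 0 1 (by decide) (by decide) (by decide) (by decide)
  · exact lemC hsign habsw hw0 _ (by decide) 1 (by decide) (by decide) (by decide) (by decide)
  · exact lemB hsign habsw _ 1 2 (by decide) (by decide) (by decide) (by decide)
  · exact lemA hsign _ 2 (by decide) (by decide) (by decide)
end

section
/- For 2 ≤ i ≤ n-1 and 1 ≤ k ≤ i-1, the type C_n signed permutation w_0 s_i s_{i-1} ... s_{i-k+1}, with one-line notation (-1, -2, ..., -(n-i-1), -(n-i+1), ..., -(n-i+k), -(n-i), -(n-i+k+1), ..., -n), contains the pattern (-2, -1, -3): there exist positions a < b < c with fl(w_a, w_b, w_c) = (-2, -1, -3), i.e., w_c < w_a < w_b < 0. -/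
/-- For `2 ≤ i ≤ n-1` and `1 ≤ k ≤ i-1`, the type `Cₙ` signed permutation
`w₀ sᵢ sᵢ₋₁ ⋯ sᵢ₋ₖ₊₁`, with one-line notation
`(-1, -2, ..., -(n-i-1), -(n-i+1), ..., -(n-i+k), -(n-i), -(n-i+k+1), ..., -n)`,
contains the pattern `(-2, -1, -3)`: there exist positions `a < b < c` with
`w c < w a < w b < 0`. -/
theorem stmt18 (n i k : ℕ) (hi2 : 2 ≤ i) (hin : i ≤ n - 1) (hk1 : 1 ≤ k) (hki : k ≤ i - 1)
    (w : ℕ → ℤ)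
    (hw : ∀ p < n, w p = if p < n - i - 1 then -((p : ℤ) + 1)
                         else if p < n - i + k - 1 then -((p : ℤ) + 2)
                         else if p = n - i + k - 1 then -((n : ℤ) - i)
                         else -((p : ℤ) + 1)) :
    ∃ a b c : ℕ, a < b ∧ b < c ∧ c < n ∧ w c < w a ∧ w a < w b ∧ w b < 0 := by
  have hn : 3 ≤ n := by omega
  have ha := hw (n - i - 1) (by omega)
  have hb := hw (n - i + k - 1) (by omega)
  have hc := hw (n - i + k) (by omega)
  refine ⟨n - i - 1, n - i + k - 1, n - i + k, by omega, by omega, by omega, ?_, ?_, ?_⟩ <;>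
    simp only [ha, hb, hc] <;> split_ifs <;> omega
end

section
/- In the symmetric group S_{n+1}, every permutation of the form (n, n-1, ..., n-k+2, n+1, n-k+1, ..., 2, 1) for 1 ≤ k ≤ n avoids both patterns 3412 and 4231. -/
/-- Every permutation of the form `(n, n-1, ..., n-k+2, n+1, n-k+1, ..., 2, 1)` in `S_{n+1}`,
for `1 ≤ k ≤ n` (i.e. every element of `w₀𝒞₁`), avoids the patterns 3412 and 4231. -/
theorem stmt19 (n k : ℕ) (hk1 : 1 ≤ k) (hkn : k ≤ n)
    (w : ℕ → ℤ)
    (hw : ∀ j, 1 ≤ j → j ≤ n + 1 →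
      w j = if j < k then (n : ℤ) + 1 - j
            else if j = k then (n : ℤ) + 1
            else (n : ℤ) + 2 - j) :
    ∀ a b c d : ℕ, 1 ≤ a → a < b → b < c → c < d → d ≤ n + 1 →
      ¬(w c < w d ∧ w d < w a ∧ w a < w b) ∧
      ¬(w d < w b ∧ w b < w c ∧ w c < w a) := by
  intro a b c d ha hab hbc hcd hd
  have wa := hw a ha (by omega)
  have wb := hw b (by omega) (by omega)
  have wc := hw c (by omega) (by omega)
  have wd := hw d (by omega) (by omega)
  constructor <;> rintro ⟨h1, h2, h3⟩ <;>
    split_ifs at wa wb wc wd <;>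
    omega
end
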